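/- For every nonnegative integer n, the number of squarefree non-overlined parts (counted with multiplicity) in all the overpartitions of n equals ∑_{j=1}^{n} 2^{ω(j)} · p̄(n−j), where ω(j) is the number of distinct prime divisors of j. -/

import Mathlib

/-- An overpartition of `n`: a pair consisting of a multiset of overlined parts (pairwise
distinct) and a multiset of non-overlined parts, all parts positive, with total sum `n`. -/
structure Overpartition (n : ℕ) where
  overlined : Multiset ℕ
  nonoverlined : Multiset ℕ
  overlined_nodup : overlined.Nodup
  overlined_pos : ∀ i ∈ overlined, 0 < i
  nonoverlined_pos : ∀ i ∈ nonoverlined, 0 < i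
  parts_sum : overlined.sum + nonoverlined.sum = n

/-- There are only finitely many overpartitions of `n`. -/
instance (n : ℕ) : Finite (Overpartition n) := by
  classical
  set big : Multiset ℕ := n • ((Multiset.range (n + 1))) with hbig
  have key : ∀ (m : Multiset ℕ), (∀ i ∈ m, 0 < i) → m.sum ≤ n → m ≤ big := by
    intro m hpos hsum
    rw [Multiset.le_iff_count]
    intro a
    rw [hbig, Multiset.count_nsmul]
    by_cases ha : a ∈ m
    · have ha1 : 0 < a := hpos a ha
      have hale : a ≤ m.sum := Multiset.le_sum_of_mem ha
      have hcard : m.card ≤ m.sum := by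
        have := Multiset.card_nsmul_le_sum (s := m) (a := 1) (fun i hi => hpos i hi)
        simpa using this
      have hcnt : m.count a ≤ m.card := Multiset.count_le_card a m
      have haa : a ∈ Multiset.range (n + 1) := Multiset.mem_range.2 (by omega)
      have h1 : Multiset.count a (Multiset.range (n + 1)) = 1 :=
        Multiset.count_eq_one_of_mem (Multiset.nodup_range _) haa
      rw [h1]
      omega
    · simp [Multiset.count_eq_zero_of_notMem ha]
  have hinj : Function.Injective (fun o : Overpartition n =>
      ((⟨o.overlined, Multiset.mem_powerset.2
          (key _ o.overlined_pos (by have := o.parts_sum; omega))⟩,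
        ⟨o.nonoverlined, Multiset.mem_powerset.2
          (key _ o.nonoverlined_pos (by have := o.parts_sum; omega))⟩) :
        {m // m ∈ big.powerset} × {m // m ∈ big.powerset})) := by
    intro a b h
    cases a; cases b
    simp_all
  exact Finite.of_injective _ hinj

/-- `S k n`: the total number of non-overlined parts equal to `k`, counted with
multiplicity, in all the overpartitions of `n`. -/
noncomputable def S (k n : ℕ) : ℕ := ∑ᶠ o : Overpartition n, o.nonoverlined.count k

/-- `pbar n`: the number of overpartitions of `n` (`pbar 0 = 1`). -/
noncomputable def pbar (n : ℕ) : ℕ := Nat.card (Overpartition n)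

/-- The multiset of all parts (overlined and non-overlined) of an overpartition. -/
def Overpartition.parts {n : ℕ} (o : Overpartition n) : Multiset ℕ :=
  o.overlined + o.nonoverlined

/-- `Mbar k n`: the number of overpartitions of `n` in which the first (i.e. largest) part
larger than `k` appears at least `k + 1` times. -/
noncomputable def Mbar (k n : ℕ) : ℕ :=
  Nat.card {o : Overpartition n // ∃ s ∈ o.parts, k < s ∧
    (∀ t ∈ o.parts, k < t → t ≤ s) ∧ k + 1 ≤ o.parts.count s}

/-- `A(|μ|,1,0;m) = ∑_{k=1}^{m} S(k,m) |μ(k)|`, the number of squarefree non-overlined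
parts (counted with multiplicity) in all the overpartitions of `m`. -/
noncomputable def Amu (m : ℕ) : ℕ :=
  ∑ k ∈ Finset.Icc 1 m, S k m * (ArithmeticFunction.moebius k).natAbs

/-- `A(|μ|,1,0;·)` extended to integer arguments: terms with negative argument are zero. -/
noncomputable def Amuz (m : ℤ) : ℤ := if 0 ≤ m then (Amu m.toNat : ℤ) else 0

/-!
Removing `j` copies of a non-overlined part `k` is a bijection onto the overpartitions of
`n - j k`, so `S(k, n) = ∑_{j ≥ 1, jk ≤ n} p̄(n - jk)`. Summing against any weight `f` and grouping
the terms by `m = jk` gives `∑_k S(k, n) f(k) = ∑_m (∑_{d ∣ m} f(d)) p̄(n - m)`. For `f = |μ|` the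
inner sum counts the squarefree divisors of `m`, i.e. the subsets of its prime factors.
-/

open Finset

attribute [ext] Overpartition

lemma Multiset.sum_tsub_replicate_add {s : Multiset ℕ} {j k : ℕ} (h : j ≤ s.count k) :
    (s - Multiset.replicate j k).sum + j * k = s.sum := by
  rw [← smul_eq_mul, ← Multiset.sum_replicate, ← Multiset.sum_add,
    tsub_add_cancel_of_le (Multiset.le_count_iff_replicate_le.mp h)]

namespace Overpartition

lemma count_nonoverlined_mul_le {n : ℕ} (o : Overpartition n) (k : ℕ) :
    o.nonoverlined.count k * k ≤ n := by
  have := Multiset.sum_tsub_replicate_add (le_refl (o.nonoverlined.count k))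
  have := o.parts_sum
  omega

lemma count_nonoverlined_le {n k : ℕ} (hk : 0 < k) (o : Overpartition n) :
    o.nonoverlined.count k ≤ n :=
  (Nat.le_mul_of_pos_right _ hk).trans (o.count_nonoverlined_mul_le k)

def addReplicate {m k : ℕ} (hk : 0 < k) (j : ℕ) (o : Overpartition m) :
    Overpartition (m + j * k) where
  overlined := o.overlined
  nonoverlined := o.nonoverlined + Multiset.replicate j k
  overlined_nodup := o.overlined_nodup
  overlined_pos := o.overlined_pos
  nonoverlined_pos i hi := by
    rcases Multiset.mem_add.mp hi with hi | hi
    · exact o.nonoverlined_pos i hi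
    · rwa [Multiset.eq_of_mem_replicate hi]
  parts_sum := by
    rw [Multiset.sum_add, Multiset.sum_replicate, smul_eq_mul, ← add_assoc, o.parts_sum]

def removeReplicate {m k j : ℕ} (o : Overpartition (m + j * k))
    (h : j ≤ o.nonoverlined.count k) : Overpartition m where
  overlined := o.overlined
  nonoverlined := o.nonoverlined - Multiset.replicate j k
  overlined_nodup := o.overlined_nodup
  overlined_pos := o.overlined_pos
  nonoverlined_pos i hi := o.nonoverlined_pos i (Multiset.mem_of_le tsub_le_self hi)
  parts_sum := by
    have := Multiset.sum_tsub_replicate_add h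
    have := o.parts_sum
    omega

def replicateEquiv {k : ℕ} (hk : 0 < k) (m j : ℕ) :
    Overpartition m ≃ {o : Overpartition (m + j * k) // j ≤ o.nonoverlined.count k} where
  toFun o := ⟨o.addReplicate hk j, by simp [addReplicate]⟩
  invFun o := removeReplicate o.1 o.2
  left_inv o := Overpartition.ext rfl (add_tsub_cancel_right _ _)
  right_inv o := Subtype.ext <| Overpartition.ext rfl <|
    tsub_add_cancel_of_le (Multiset.le_count_iff_replicate_le.mp o.2)

lemma card_le_count_nonoverlined {k : ℕ} (hk : 0 < k) (n j : ℕ) :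
    Nat.card {o : Overpartition n // j ≤ o.nonoverlined.count k} =
      if j * k ≤ n then pbar (n - j * k) else 0 := by
  split_ifs with h
  · obtain ⟨m, rfl⟩ := Nat.exists_eq_add_of_le' h
    rw [Nat.add_sub_cancel, pbar]
    exact (Nat.card_congr (replicateEquiv hk m j)).symm
  · have : IsEmpty {o : Overpartition n // j ≤ o.nonoverlined.count k} :=
      ⟨fun ⟨o, ho⟩ => h ((Nat.mul_le_mul_right k ho).trans (o.count_nonoverlined_mul_le k))⟩
    exact Nat.card_of_isEmpty

end Overpartition

lemma S_eq_sum_pbar {k : ℕ} (hk : 0 < k) (n : ℕ) :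
    S k n = ∑ j ∈ Icc 1 n, if j * k ≤ n then pbar (n - j * k) else 0 := by
  have : Fintype (Overpartition n) := Fintype.ofFinite _
  have hcount (o : Overpartition n) :
      o.nonoverlined.count k = ∑ j ∈ Icc 1 n, if j ≤ o.nonoverlined.count k then 1 else 0 := by
    have hle := o.count_nonoverlined_le hk
    rw [sum_boole, Nat.cast_id]
    have : {j ∈ Icc 1 n | j ≤ o.nonoverlined.count k} = Icc 1 (o.nonoverlined.count k) := by
      ext j; simp only [mem_filter, mem_Icc]; omega
    rw [this, Nat.card_Icc, Nat.add_sub_cancel]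
  rw [S, finsum_eq_sum_of_fintype, sum_congr rfl fun o _ => hcount o, sum_comm]
  refine sum_congr rfl fun j _ => ?_
  rw [sum_boole, Nat.cast_id, ← Fintype.card_subtype, ← Nat.card_eq_fintype_card,
    Overpartition.card_le_count_nonoverlined hk]

lemma Nat.sum_Icc_sum_divisorsAntidiagonal {M : Type*} [AddCommMonoid M] (n : ℕ) (F : ℕ × ℕ → M) :
    ∑ m ∈ Icc 1 n, ∑ p ∈ m.divisorsAntidiagonal, F p =
      ∑ p ∈ Icc 1 n ×ˢ Icc 1 n with p.1 * p.2 ≤ n, F p := by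
  have hmaps (p : ℕ × ℕ) (hp : p ∈ {p ∈ Icc 1 n ×ˢ Icc 1 n | p.1 * p.2 ≤ n}) :
      p.1 * p.2 ∈ Icc 1 n := by
    simp only [mem_filter, mem_product, mem_Icc] at hp ⊢
    exact ⟨Nat.mul_pos hp.1.1.1 hp.1.2.1, hp.2⟩
  rw [← sum_fiberwise_of_maps_to hmaps]
  refine sum_congr rfl fun m hm => sum_congr ?_ fun _ _ => rfl
  ext ⟨a, b⟩
  simp only [mem_filter, mem_product, mem_Icc, Nat.mem_divisorsAntidiagonal] at hm ⊢
  constructor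
  · rintro ⟨rfl, -⟩
    obtain ⟨ha, hb⟩ := CanonicallyOrderedAdd.mul_pos.mp (Nat.succ_le_iff.mp hm.1)
    have := Nat.le_mul_of_pos_right a hb
    have := Nat.le_mul_of_pos_left b ha
    omega
  · rintro ⟨-, rfl⟩
    omega

theorem sum_S_mul (f : ℕ → ℕ) (n : ℕ) :
    ∑ k ∈ Icc 1 n, S k n * f k = ∑ m ∈ Icc 1 n, (∑ d ∈ m.divisors, f d) * pbar (n - m) := calc
  ∑ k ∈ Icc 1 n, S k n * f k
      = ∑ k ∈ Icc 1 n, ∑ j ∈ Icc 1 n, if j * k ≤ n then f k * pbar (n - j * k) else 0 := by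
        refine sum_congr rfl fun k hk => ?_
        rw [S_eq_sum_pbar (mem_Icc.mp hk).1, sum_mul]
        refine sum_congr rfl fun j _ => ?_
        split_ifs <;> simp [mul_comm]
  _ = ∑ p ∈ Icc 1 n ×ˢ Icc 1 n with p.1 * p.2 ≤ n, f p.2 * pbar (n - p.1 * p.2) := by
        rw [sum_comm, sum_filter, sum_product]
  _ = ∑ m ∈ Icc 1 n, (∑ d ∈ m.divisors, f d) * pbar (n - m) := by
        rw [← Nat.sum_Icc_sum_divisorsAntidiagonal]
        refine sum_congr rfl fun m _ => ?_
        rw [sum_mul, ← Nat.sum_divisorsAntidiagonal' fun _ d => f d * pbar (n - m)]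
        exact sum_congr rfl fun p hp => by rw [(Nat.mem_divisorsAntidiagonal.mp hp).1]

lemma Nat.sum_divisors_natAbs_moebius {m : ℕ} (hm : m ≠ 0) :
    ∑ d ∈ m.divisors, (ArithmeticFunction.moebius d).natAbs = 2 ^ m.primeFactors.card := by
  have hsq := Nat.sum_divisors_filter_squarefree hm (f := fun _ => 1)
  simp only [sum_const, smul_eq_mul, mul_one, card_powerset] at hsq
  rw [Nat.factors_eq, List.toFinset_coe, Nat.toFinset_factors] at hsq
  rw [← hsq, card_filter]
  refine sum_congr rfl fun d _ => ?_
  rw [← Int.natAbs_abs, ArithmeticFunction.abs_moebius]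
  split_ifs <;> rfl

theorem stmt15 (n : ℕ) :
    Amu n = ∑ j ∈ Finset.Icc 1 n, 2 ^ (Nat.primeFactors j).card * pbar (n - j) :=
  (sum_S_mul _ n).trans <| sum_congr rfl fun m hm => by
    rw [Nat.sum_divisors_natAbs_moebius (Nat.one_le_iff_ne_zero.mp (mem_Icc.mp hm).1)]
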